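/- Let C be an E₄-submodule (linear code) of V = E₄^m, and let L : E₄ → ℤ/4ℤ be a surjective ℤ/4ℤ-linear map. Then the L-dual of C (all vectors v with L(⟨v,x⟩) = 0 for all x ∈ C, where ⟨·,·⟩ is the standard bilinear form) equals the dual of C (all vectors v with ⟨v,x⟩ = 0 for all x ∈ C). -/
import Mathlib


/-- the Galois ring E₄ = ℤ[ω]/4ℤ[ω] = GR(4²), realized as pairs a + bω with
a, b ∈ ℤ/4ℤ, where ω² + ω + 1 = 0 -/
structure E4 : Type where
  re : ZMod 4
  im : ZMod 4
deriving DecidableEq, Fintype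

namespace E4

instance : Zero E4 := ⟨⟨0, 0⟩⟩
instance : One E4 := ⟨⟨1, 0⟩⟩
instance : Add E4 := ⟨fun x y => ⟨x.re + y.re, x.im + y.im⟩⟩
instance : Neg E4 := ⟨fun x => ⟨-x.re, -x.im⟩⟩
instance : Mul E4 :=
  ⟨fun x y => ⟨x.re * y.re - x.im * y.im, x.re * y.im + x.im * y.re - x.im * y.im⟩⟩

theorem zero_def : (0 : E4) = ⟨0, 0⟩ := rfl
theorem one_def : (1 : E4) = ⟨1, 0⟩ := rfl
theorem add_def (x y : E4) : x + y = ⟨x.re + y.re, x.im + y.im⟩ := rfl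
theorem neg_def (x : E4) : -x = ⟨-x.re, -x.im⟩ := rfl
theorem mul_def (x y : E4) :
    x * y = ⟨x.re * y.re - x.im * y.im, x.re * y.im + x.im * y.re - x.im * y.im⟩ := rfl

instance : CommRing E4 where
  add_assoc := fun ⟨a, b⟩ ⟨c, d⟩ ⟨e, f⟩ =>
    congrArg₂ E4.mk (add_assoc a c e) (add_assoc b d f)
  zero_add := fun ⟨a, b⟩ => congrArg₂ E4.mk (zero_add a) (zero_add b)
  add_zero := fun ⟨a, b⟩ => congrArg₂ E4.mk (add_zero a) (add_zero b)
  add_comm := fun ⟨a, b⟩ ⟨c, d⟩ =>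
    congrArg₂ E4.mk (add_comm a c) (add_comm b d)
  left_distrib := fun ⟨a, b⟩ ⟨c, d⟩ ⟨e, f⟩ =>
    congrArg₂ E4.mk
      (show a * (c + e) - b * (d + f) = (a * c - b * d) + (a * e - b * f) by ring)
      (show a * (d + f) + b * (c + e) - b * (d + f)
          = (a * d + b * c - b * d) + (a * f + b * e - b * f) by ring)
  right_distrib := fun ⟨a, b⟩ ⟨c, d⟩ ⟨e, f⟩ =>
    congrArg₂ E4.mk
      (show (a + c) * e - (b + d) * f = (a * e - b * f) + (c * e - d * f) by ring)
      (show (a + c) * f + (b + d) * e - (b + d) * f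
          = (a * f + b * e - b * f) + (c * f + d * e - d * f) by ring)
  zero_mul := fun ⟨a, b⟩ =>
    congrArg₂ E4.mk (show 0 * a - 0 * b = 0 by ring)
      (show 0 * b + 0 * a - 0 * b = 0 by ring)
  mul_zero := fun ⟨a, b⟩ =>
    congrArg₂ E4.mk (show a * 0 - b * 0 = 0 by ring)
      (show a * 0 + b * 0 - b * 0 = 0 by ring)
  mul_assoc := fun ⟨a, b⟩ ⟨c, d⟩ ⟨e, f⟩ =>
    congrArg₂ E4.mk
      (show (a * c - b * d) * e - (a * d + b * c - b * d) * f
          = a * (c * e - d * f) - b * (c * f + d * e - d * f) by ring)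
      (show (a * c - b * d) * f + (a * d + b * c - b * d) * e
              - (a * d + b * c - b * d) * f
          = a * (c * f + d * e - d * f) + b * (c * e - d * f)
              - b * (c * f + d * e - d * f) by ring)
  one_mul := fun ⟨a, b⟩ =>
    congrArg₂ E4.mk (show 1 * a - 0 * b = a by ring)
      (show 1 * b + 0 * a - 0 * b = b by ring)
  mul_one := fun ⟨a, b⟩ =>
    congrArg₂ E4.mk (show a * 1 - b * 0 = a by ring)
      (show a * 0 + b * 1 - b * 0 = b by ring)
  neg_add_cancel := fun ⟨a, b⟩ =>
    congrArg₂ E4.mk (neg_add_cancel a) (neg_add_cancel b)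
  mul_comm := fun ⟨a, b⟩ ⟨c, d⟩ =>
    congrArg₂ E4.mk (show a * c - b * d = c * a - d * b by ring)
      (show a * d + b * c - b * d = c * b + d * a - d * b by ring)
  nsmul := nsmulRec
  zsmul := zsmulRec

end E4

/-- the image of the primitive cube root of unity ω in E₄ -/
def omg : E4 := ⟨0, 1⟩
/-- the conjugate root ω̄ = -1 - ω -/
def omgBar : E4 := -1 - omg
/-- ψ = ω - 1 -/
def psi : E4 := omg - 1
/-- conjugation a + bω ↦ a + bω̄ -/
def conjE : E4 → E4 := fun z => ⟨z.re - z.im, -z.im⟩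
/-- the trace Tr(z) = z + conj z, expressed with values in ℤ/4ℤ -/
def TrZ : E4 → ZMod 4 := fun z => 2 * z.re - z.im
/-- canonical embedding of ℤ/4ℤ into E₄ -/
def ofZ4 : ZMod 4 → E4 := fun c => ⟨c, 0⟩
/-- Ω = {±1, ±ω, ±ω̄} -/
def Omega : Finset E4 := {1, omg, omgBar, -1, -omg, -omgBar}
/-- ψΩ -/
def psiOmega : Finset E4 := Omega.image (fun x => psi * x)
/-- the Doob weight on E₄ -/
def wtE (v : E4) : ℕ := if v = 0 then 0 else if v ∈ Omega then 1 else 2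
/-- the Doob coweight on E₄ -/
def waE (v : E4) : ℕ := if v = 0 then 0 else if v ∈ psiOmega then 1 else 2

lemma key_E4 (α β : ZMod 4) (h : ∃ r i : ZMod 4, r * α + i * β = 1) (z : E4)
    (hz : ∀ a : E4, (a * z).re * α + (a * z).im * β = 0) : z = 0 := by
  revert h hz; revert α β z; decide

lemma E4.decomp (z : E4) : z = ofZ4 z.re * 1 + ofZ4 z.im * omg := by
  cases z with
  | mk r i =>
    simp [ofZ4, omg, E4.mul_def, E4.add_def, E4.one_def]

/-- For a linear code C ⊆ E₄^m and any surjective ℤ/4ℤ-linear L : E₄ → ℤ/4ℤ,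
the L-dual of C equals the dual of C. -/
theorem L_dual_eq_dual (m : ℕ) (C : Submodule E4 (Fin m → E4))
    (L : E4 → ZMod 4)
    (hadd : ∀ z w : E4, L (z + w) = L z + L w)
    (hsmul : ∀ (c : ZMod 4) (z : E4), L (ofZ4 c * z) = c * L z)
    (hsurj : Function.Surjective L) :
    {v : Fin m → E4 | ∀ x ∈ C, L (∑ j, v j * x j) = 0} =
    {v : Fin m → E4 | ∀ x ∈ C, ∑ j, v j * x j = 0} := by
  have hL0 : L 0 = 0 := by
    have := hadd 0 0
    simpa using this.symm
  have hLz : ∀ z : E4, L z = z.re * L 1 + z.im * L omg := by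
    intro z
    conv_lhs => rw [E4.decomp z]
    rw [hadd, hsmul, hsmul]
  ext v
  simp only [Set.mem_setOf_eq]
  constructor
  · intro h x hx
    set z : E4 := ∑ j, v j * x j with hzdef
    have hz : ∀ a : E4, L (a * z) = 0 := by
      intro a
      have hax : a • x ∈ C := C.smul_mem a hx
      have := h (a • x) hax
      have heq : (∑ j, v j * (a • x) j) = a * z := by
        rw [hzdef, Finset.mul_sum]
        refine Finset.sum_congr rfl fun j _ => ?_
        simp [Pi.smul_apply, smul_eq_mul]; ring
      rwa [heq] at this
    obtain ⟨u, hu⟩ := hsurj 1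
    refine key_E4 (L 1) (L omg) ⟨u.re, u.im, ?_⟩ z ?_
    · rw [← hLz, hu]
    · intro a
      have := hz a
      rwa [hLz] at this
  · intro h x hx
    rw [h x hx, hL0]
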